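/- Let q = 5 and let P, Q be collinear simplex points in F^6. Then every point of the set I(⟨I(P), I(Q)⟩) \ {P, Q} is non-collinear to every point of the line ⟨P, Q⟩ distinct from P and Q. -/

import Mathlib

open Submodule Module

/-- All columns of the 2×n matrix with rows `x` and `y` are nonzero and pairwise
non-proportional (equivalently, every 2×2 minor is nonzero). -/
def GoodPair {F : Type} [Field F] {n : ℕ} (x y : Fin n → F) : Prop :=
  ∀ i j : Fin n, i ≠ j → x i * y j ≠ x j * y i

/-- A simplex line: a 2-dimensional subspace spanned by the rows of a generator
matrix all of whose columns are nonzero and pairwise non-proportional. -/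
def IsSimplexLine {F : Type} [Field F] {n : ℕ} (C : Submodule F (Fin n → F)) : Prop :=
  ∃ x y : Fin n → F, GoodPair x y ∧ C = span F {x, y}

/-- A simplex point: a 1-dimensional subspace spanned by a vector with exactly
one zero coordinate. -/
def IsSimplexPoint {F : Type} [Field F] {n : ℕ} (P : Submodule F (Fin n → F)) : Prop :=
  ∃ x : Fin n → F, (∃! i, x i = 0) ∧ P = span F {x}

/-- Two simplex points are collinear: they are spanned by the two rows of a
generator matrix of a simplex code, i.e. there is a simplex line containing both. -/
def PtCollinear {F : Type} [Field F] {n : ℕ} (P Q : Submodule F (Fin n → F)) : Prop :=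
  ∃ x y : Fin n → F, GoodPair x y ∧ P = span F {x} ∧ Q = span F {y}

/-- A clique of the graph Γ of simplex lines: all members are simplex lines and
any two distinct members intersect in a 1-dimensional subspace. -/
def IsGammaClique {F : Type} [Field F] {n : ℕ} (T : Set (Submodule F (Fin n → F))) : Prop :=
  (∀ L ∈ T, IsSimplexLine L) ∧
    ∀ L ∈ T, ∀ L' ∈ T, L ≠ L' → finrank F ↥(L ⊓ L') = 1

/-- A top of Γ: a maximal clique of Γ consisting of all simplex lines contained
in a fixed 3-dimensional subspace (projective plane). -/
def IsGammaTop {F : Type} [Field F] {n : ℕ} (T : Set (Submodule F (Fin n → F))) : Prop :=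
  IsGammaClique T ∧ (∀ T' : Set (Submodule F (Fin n → F)), IsGammaClique T' → T ⊆ T' → T' = T) ∧
    ∃ W : Submodule F (Fin n → F), finrank F ↥W = 3 ∧
      T = {L | IsSimplexLine L ∧ L ≤ W}

/-- A monomial linear automorphism: `x ↦ (a₁ x_{σ(1)}, …, aₙ x_{σ(n)})` with all
`aᵢ` nonzero and `σ` a permutation. -/
def IsMonomial {F : Type} [Field F] {n : ℕ} (l : (Fin n → F) ≃ₗ[F] (Fin n → F)) : Prop :=
  ∃ (a : Fin n → F) (σ : Equiv.Perm (Fin n)),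
    (∀ i, a i ≠ 0) ∧ ∀ (x : Fin n → F) (i : Fin n), l x i = a i * x (σ i)

/-- Coordinatewise inversion `I` (with `0⁻¹ = 0`). -/
def vecInv {F : Type} [Field F] {n : ℕ} (x : Fin n → F) : Fin n → F := fun i => (x i)⁻¹

instance : Fact (Nat.Prime 5) := ⟨by norm_num⟩

/-!
The columns of the generator matrix with rows `x`, `y` represent, up to nonzero scalars, all
`q + 1 = 6` points of the projective line over `𝔽₅`. For `z = e I(x) + f I(y)` and
`w = c x + d y`, column `i` of the matrix with rows `I(z)`, `w` is obtained from column `i` of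
`(x; y)` by the map `(p₁, p₂) ↦ ((e p₁⁻¹ + f p₂⁻¹)⁻¹, c p₁ + d p₂)`, which commutes with scalars.
So `(I(z), w)` is a good pair only if this map sends the six points of the projective line to six
distinct points, and a finite check over `e, f, c, d ∈ 𝔽₅ˣ` shows that it never does.
-/

section GoodPair

variable {F : Type} [Field F] {n : ℕ}

lemma GoodPair.of_smul {a b : Fin n → F} {t s : F} (h : GoodPair (t • a) (s • b)) :
    GoodPair a b := by
  intro i j hij hab
  apply h i j hij
  simp only [Pi.smul_apply, smul_eq_mul]
  linear_combination t * s * hab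

lemma PtCollinear.goodPair {a b : Fin n → F} (h : PtCollinear (span F {a}) (span F {b})) :
    GoodPair a b := by
  obtain ⟨u, v, huv, hu, hv⟩ := h
  obtain ⟨t, rfl⟩ := mem_span_singleton.mp (hu ▸ mem_span_singleton_self u)
  obtain ⟨s, rfl⟩ := mem_span_singleton.mp (hv ▸ mem_span_singleton_self v)
  exact huv.of_smul

lemma mul_sub_mul_eq_of_col_eq_smul {a b : Fin n → F} {i j : Fin n} {s t : F} {u v : F × F}
    (hi : (a i, b i) = s • u) (hj : (a j, b j) = t • v) :
    a i * b j - a j * b i = s * t * (u.1 * v.2 - v.1 * u.2) := by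
  simp only [Prod.ext_iff, Prod.smul_fst, Prod.smul_snd, smul_eq_mul] at hi hj
  rw [hi.1, hi.2, hj.1, hj.2]
  ring

lemma GoodPair.col_ne_zero {x y : Fin n → F} (h : GoodPair x y) (hn : 2 ≤ n) (i : Fin n) :
    (x i, y i) ≠ 0 := by
  have : Nontrivial (Fin n) := Fin.nontrivial_iff_two_le.mpr hn
  obtain ⟨j, hj⟩ := exists_ne i
  intro h0
  rw [Prod.mk_eq_zero] at h0
  exact h i j hj.symm (by simp [h0.1, h0.2])

lemma GoodPair.exists_col_eq_smul [Finite F] {x y : Fin n → F} (h : GoodPair x y)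
    (hn : n = Nat.card F + 1) {p : F × F} (hp : p ≠ 0) :
    ∃ i, ∃ s : F, s ≠ 0 ∧ (x i, y i) = s • p := by
  have hn2 : 2 ≤ n := by have := Finite.one_lt_card (α := F); omega
  let col : Fin n → Projectivization F (F × F) := fun i =>
    Projectivization.mk F (x i, y i) (h.col_ne_zero hn2 i)
  have hinj : Function.Injective col := by
    intro i j hij
    by_contra hne
    obtain ⟨a, ha⟩ := (Projectivization.mk_eq_mk_iff' F _ _ _ _).mp hij
    simp only [Prod.ext_iff, Prod.smul_fst, Prod.smul_snd, smul_eq_mul] at ha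
    exact h i j hne (by rw [← ha.1, ← ha.2]; ring)
  have hcard : Nat.card (Projectivization F (F × F)) ≤ Nat.card (Fin n) := by
    rw [Projectivization.card_of_finrank_two F _ (by simp), Nat.card_fin, hn]
  obtain ⟨i, hi⟩ := (hinj.bijective_of_nat_card_le hcard).2 (Projectivization.mk F p hp)
  obtain ⟨a, ha⟩ := (Projectivization.mk_eq_mk_iff F _ _ _ hp).mp hi
  exact ⟨i, a, a.ne_zero, ha.symm⟩

end GoodPair

section InvLine

variable {F : Type} [Field F] {n : ℕ}

lemma vecInv_smul (e : F) (v : Fin n → F) : vecInv (e • v) = e⁻¹ • vecInv v := by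
  ext i
  simp [vecInv, mul_comm]

lemma vecInv_vecInv (v : Fin n → F) : vecInv (vecInv v) = v := by
  ext i
  simp [vecInv]

lemma span_vecInv_smul_vecInv {e : F} {v : Fin n → F} (h : e • vecInv v ≠ 0) :
    span F {vecInv (e • vecInv v)} = span F {v} := by
  rw [vecInv_smul, vecInv_vecInv,
    span_singleton_smul_eq (inv_ne_zero (left_ne_zero_of_smul h)).isUnit]

def invLineCol (e f c d : F) (p : F × F) : F × F :=
  ((e * p.1⁻¹ + f * p.2⁻¹)⁻¹, c * p.1 + d * p.2)

lemma invLineCol_smul (e f c d s : F) (p : F × F) :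
    invLineCol e f c d (s • p) = s • invLineCol e f c d p := by
  ext
  · simp only [invLineCol, Prod.smul_fst, Prod.smul_snd, smul_eq_mul]
    rw [mul_inv, mul_inv,
      show e * (s⁻¹ * p.1⁻¹) + f * (s⁻¹ * p.2⁻¹) = s⁻¹ * (e * p.1⁻¹ + f * p.2⁻¹) by ring,
      mul_inv, inv_inv]
  · simp only [invLineCol, Prod.smul_fst, Prod.smul_snd, smul_eq_mul]
    ring

lemma invLineCol_col (e f c d : F) (x y : Fin n → F) (i : Fin n) :
    (vecInv (e • vecInv x + f • vecInv y) i, (c • x + d • y) i) = invLineCol e f c d (x i, y i) :=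
  rfl

end InvLine

lemma ZMod.inv_eq_pow_sub_two {p : ℕ} [Fact p.Prime] (hp : p ≠ 2) (a : ZMod p) :
    a⁻¹ = a ^ (p - 2) := by
  have hp3 : 3 ≤ p := by have := (Fact.out : p.Prime).two_le; omega
  rcases eq_or_ne a 0 with rfl | ha
  · rw [inv_zero, zero_pow (by omega)]
  · refine inv_eq_of_mul_eq_one_right ?_
    rw [← pow_succ', show p - 2 + 1 = p - 1 by omega, ZMod.pow_card_sub_one_eq_one ha]

lemma exists_invLineCol_proportional :
    ∀ e f c d : ZMod 5, e ≠ 0 → f ≠ 0 → c ≠ 0 → d ≠ 0 →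
    ∃ p p' : ZMod 5 × ZMod 5, p.1 * p'.2 ≠ p'.1 * p.2 ∧
      (invLineCol e f c d p).1 * (invLineCol e f c d p').2 =
        (invLineCol e f c d p').1 * (invLineCol e f c d p).2 := by
  simp only [invLineCol, ZMod.inv_eq_pow_sub_two (p := 5) (by norm_num)]
  decide

theorem inv_line_points_noncollinear_general (x y : Fin 6 → ZMod 5)
    (hxy : GoodPair x y) :
    ∀ R ∈ ({R : Submodule (ZMod 5) (Fin 6 → ZMod 5) |
        ∃ z : Fin 6 → ZMod 5, z ≠ 0 ∧ z ∈ span (ZMod 5) {vecInv x, vecInv y} ∧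
          R = span (ZMod 5) {vecInv z}} \ {span (ZMod 5) {x}, span (ZMod 5) {y}}),
      ∀ w : Fin 6 → ZMod 5, w ≠ 0 → w ∈ span (ZMod 5) {x, y} →
        span (ZMod 5) {w} ≠ span (ZMod 5) {x} → span (ZMod 5) {w} ≠ span (ZMod 5) {y} →
        ¬ PtCollinear R (span (ZMod 5) {w}) := by
  rintro R ⟨⟨z, hz0, hz, rfl⟩, hR⟩ w hw0 hw hwx hwy hcol
  obtain ⟨e, f, rfl⟩ := mem_span_pair.mp hz
  obtain ⟨c, d, rfl⟩ := mem_span_pair.mp hw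
  simp only [Set.mem_insert_iff, Set.mem_singleton_iff, not_or] at hR
  have he : e ≠ 0 := by
    rintro rfl
    simp only [zero_smul, zero_add] at hz0 hR
    exact hR.2 (span_vecInv_smul_vecInv hz0)
  have hf : f ≠ 0 := by
    rintro rfl
    simp only [zero_smul, add_zero] at hz0 hR
    exact hR.1 (span_vecInv_smul_vecInv hz0)
  have hc : c ≠ 0 := by
    rintro rfl
    simp only [zero_smul, zero_add] at hw0 hwy
    exact hwy (span_singleton_smul_eq (left_ne_zero_of_smul hw0).isUnit y)
  have hd : d ≠ 0 := by
    rintro rfl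
    simp only [zero_smul, add_zero] at hw0 hwx
    exact hwx (span_singleton_smul_eq (left_ne_zero_of_smul hw0).isUnit x)
  obtain ⟨p, p', hpp', hcollapse⟩ := exists_invLineCol_proportional e f c d he hf hc hd
  have hp : p ≠ 0 := by rintro rfl; simp at hpp'
  have hp' : p' ≠ 0 := by rintro rfl; simp at hpp'
  obtain ⟨i, s, hs, hi⟩ := hxy.exists_col_eq_smul (by simp) hp
  obtain ⟨j, t, ht, hj⟩ := hxy.exists_col_eq_smul (by simp) hp'
  have hij : i ≠ j := by
    rintro rfl
    have hminor := (mul_sub_mul_eq_of_col_eq_smul hi hj).symm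
    rw [sub_self, mul_eq_zero, or_iff_right (mul_ne_zero hs ht), sub_eq_zero] at hminor
    exact hpp' hminor
  refine hcol.goodPair i j hij (sub_eq_zero.mp ?_)
  rw [mul_sub_mul_eq_of_col_eq_smul (u := invLineCol e f c d p) (v := invLineCol e f c d p')
    (by rw [invLineCol_col, hi, invLineCol_smul]) (by rw [invLineCol_col, hj, invLineCol_smul]),
    hcollapse, sub_self, mul_zero]

/-- For q = 5 and collinear simplex points P = ⟨x⟩, Q = ⟨y⟩, every point of
I(⟨I(P),I(Q)⟩) \ {P,Q} is non-collinear to every point of the line ⟨P,Q⟩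
distinct from P and Q. -/
theorem inv_line_points_noncollinear (x y : Fin 6 → ZMod 5)
    (hx : ∃! i, x i = 0) (hy : ∃! i, y i = 0) (hxy : GoodPair x y) :
    ∀ R ∈ ({R : Submodule (ZMod 5) (Fin 6 → ZMod 5) |
        ∃ z : Fin 6 → ZMod 5, z ≠ 0 ∧ z ∈ span (ZMod 5) {vecInv x, vecInv y} ∧
          R = span (ZMod 5) {vecInv z}} \ {span (ZMod 5) {x}, span (ZMod 5) {y}}),
      ∀ w : Fin 6 → ZMod 5, w ≠ 0 → w ∈ span (ZMod 5) {x, y} →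
        span (ZMod 5) {w} ≠ span (ZMod 5) {x} → span (ZMod 5) {w} ≠ span (ZMod 5) {y} →
        ¬ PtCollinear R (span (ZMod 5) {w}) :=
  inv_line_points_noncollinear_general x y hxy
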